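/- Let k > 0, x_K ∈ ℝ², h_K > 0, let d₁, …, d_n be unit vectors in ℝ², and let α₁, …, α_n be nonnegative real numbers with Σ_{ℓ=1}^n α_ℓ = 1 and Σ_{ℓ=1}^n α_ℓ d_ℓ = 0. Define b₁(x) = Σ_{ℓ=1}^n α_ℓ exp(i k d_ℓ·(x − x_K)). Then for every measurable set K ⊂ ℝ² of finite Lebesgue measure |K| contained in the closed ball of radius h_K centered at x_K, one has ‖∇b₁‖_{L²(K)} ≤ h_K k² |K|^{1/2}, where ‖∇b₁‖_{L²(K)}² = ∫_K |∇b₁(x)|² dx. -/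

import Mathlib

/-!
Because `∑ α_ℓ d_ℓ = 0`, one may subtract `1` from every exponential in
`∇b₁(x) = ∑ α_ℓ i k d_ℓ exp(i k d_ℓ·(x - x_K))` without changing it. Then
`|exp(iθ) - 1| ≤ |θ|` with `θ = k d_ℓ·(x - x_K)` gives `|∇b₁(x)| ≤ k² |x - x_K| ≤ h_K k²` on `K`,
and integrating this pointwise bound over `K` gives the `L²` estimate.
-/

open MeasureTheory Complex

def EuclideanSpace.toComplex {ι : Type*} (v : EuclideanSpace ℝ ι) : EuclideanSpace ℂ ι :=
  WithLp.toLp 2 fun j => (v j : ℂ)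

@[simp]
lemma EuclideanSpace.toComplex_apply {ι : Type*} (v : EuclideanSpace ℝ ι) (j : ι) :
    v.toComplex j = v j := rfl

variable {ι κ : Type*} [Fintype ι] [Fintype κ]

@[simp]
lemma EuclideanSpace.norm_toComplex (v : EuclideanSpace ℝ ι) : ‖v.toComplex‖ = ‖v‖ := by
  simp [EuclideanSpace.norm_eq]

noncomputable def gradPlaneWaveCombination (k : ℝ) (xK : EuclideanSpace ℝ ι) (α : κ → ℝ)
    (d : κ → EuclideanSpace ℝ ι) (x : EuclideanSpace ℝ ι) : EuclideanSpace ℂ ι :=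
  ∑ ℓ, ((α ℓ : ℂ) * I * k * exp (I * k * (inner ℝ (d ℓ) (x - xK) : ℝ))) • (d ℓ).toComplex

lemma gradPlaneWaveCombination_eq_sum_exp_sub_one {k : ℝ} {xK : EuclideanSpace ℝ ι}
    {α : κ → ℝ} {d : κ → EuclideanSpace ℝ ι} (hvec : ∑ ℓ, α ℓ • d ℓ = 0)
    (x : EuclideanSpace ℝ ι) :
    gradPlaneWaveCombination k xK α d x =
      ∑ ℓ, ((α ℓ : ℂ) * I * k * (exp (I * k * (inner ℝ (d ℓ) (x - xK) : ℝ)) - 1)) •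
        (d ℓ).toComplex := by
  ext j
  have hvec_j : ∑ ℓ, (α ℓ : ℂ) * d ℓ j = 0 := by
    exact_mod_cast by simpa using congrArg (· j) hvec
  simp only [gradPlaneWaveCombination, WithLp.ofLp_sum, Finset.sum_apply, PiLp.smul_apply,
    smul_eq_mul, EuclideanSpace.toComplex_apply, sub_mul, mul_sub, Finset.sum_sub_distrib]
  rw [eq_comm, sub_eq_self]
  calc ∑ ℓ, (α ℓ : ℂ) * I * k * 1 * d ℓ j = I * k * ∑ ℓ, (α ℓ : ℂ) * d ℓ j := by
        rw [Finset.mul_sum]; exact Finset.sum_congr rfl fun ℓ _ ↦ by ring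
    _ = 0 := by rw [hvec_j, mul_zero]

lemma norm_gradPlaneWaveCombination_le {k : ℝ} {xK : EuclideanSpace ℝ ι}
    {α : κ → ℝ} {d : κ → EuclideanSpace ℝ ι} (hd : ∀ ℓ, ‖d ℓ‖ = 1) (hα : ∀ ℓ, 0 ≤ α ℓ)
    (hsum : ∑ ℓ, α ℓ = 1) (hvec : ∑ ℓ, α ℓ • d ℓ = 0) (x : EuclideanSpace ℝ ι) :
    ‖gradPlaneWaveCombination k xK α d x‖ ≤ k ^ 2 * ‖x - xK‖ := by
  have hterm (ℓ : κ) :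
      ‖((α ℓ : ℂ) * I * k * (exp (I * k * (inner ℝ (d ℓ) (x - xK) : ℝ)) - 1)) •
        (d ℓ).toComplex‖ ≤ α ℓ * (k ^ 2 * ‖x - xK‖) := by
    have hphase : ‖exp (I * k * (inner ℝ (d ℓ) (x - xK) : ℝ)) - 1‖ ≤ |k| * ‖x - xK‖ := by
      calc _ ≤ ‖k * inner ℝ (d ℓ) (x - xK)‖ := by
            simpa [mul_assoc] using
              Real.norm_exp_I_mul_ofReal_sub_one_le (x := k * inner ℝ (d ℓ) (x - xK))
        _ ≤ |k| * (‖d ℓ‖ * ‖x - xK‖) := by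
            rw [norm_mul, Real.norm_eq_abs]; gcongr; exact abs_real_inner_le_norm _ _
        _ = |k| * ‖x - xK‖ := by rw [hd, one_mul]
    calc _ = α ℓ * |k| * ‖exp (I * k * (inner ℝ (d ℓ) (x - xK) : ℝ)) - 1‖ := by
          simp [norm_smul, hd, abs_of_nonneg (hα ℓ)]
      _ ≤ α ℓ * |k| * (|k| * ‖x - xK‖) := by gcongr; exact mul_nonneg (hα ℓ) (abs_nonneg k)
      _ = α ℓ * (k ^ 2 * ‖x - xK‖) := by rw [← sq_abs k]; ring
  calc _ ≤ ∑ ℓ, α ℓ * (k ^ 2 * ‖x - xK‖) := by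
        rw [gradPlaneWaveCombination_eq_sum_exp_sub_one hvec]
        exact (norm_sum_le _ _).trans (Finset.sum_le_sum fun ℓ _ ↦ hterm ℓ)
    _ = k ^ 2 * ‖x - xK‖ := by rw [← Finset.sum_mul, hsum, one_mul]

lemma sqrt_setIntegral_norm_sq_le {X E : Type*} [MeasurableSpace X] [NormedAddCommGroup E]
    {μ : Measure X} {s : Set X} {f : X → E} {C : ℝ} (hC : 0 ≤ C) (hs : μ s < ⊤)
    (hf : ∀ x ∈ s, ‖f x‖ ≤ C) :
    √(∫ x in s, ‖f x‖ ^ 2 ∂μ) ≤ C * √(μ.real s) := by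
  have hint : ∫ x in s, ‖f x‖ ^ 2 ∂μ ≤ C ^ 2 * μ.real s :=
    (Real.le_norm_self _).trans <| norm_setIntegral_le_of_norm_le_const hs fun x hx ↦ by
      rw [norm_pow, norm_norm]; exact pow_le_pow_left₀ (norm_nonneg _) (hf x hx) 2
  calc _ ≤ √(C ^ 2 * μ.real s) := Real.sqrt_le_sqrt hint
    _ = C * √(μ.real s) := by rw [Real.sqrt_mul (sq_nonneg C), Real.sqrt_sq hC]

theorem planeWaveCombination_grad_L2_bound_general
    (k : ℝ) (xK : EuclideanSpace ℝ (Fin 2)) (hK : ℝ) (hhK : 0 < hK)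
    (n : ℕ) (d : Fin n → EuclideanSpace ℝ (Fin 2)) (hd : ∀ ℓ, ‖d ℓ‖ = 1)
    (α : Fin n → ℝ) (hα : ∀ ℓ, 0 ≤ α ℓ) (hsum : ∑ ℓ, α ℓ = 1)
    (hvec : ∑ ℓ, α ℓ • d ℓ = (0 : EuclideanSpace ℝ (Fin 2)))
    (g : EuclideanSpace ℝ (Fin 2) → EuclideanSpace ℂ (Fin 2))
    (hg : ∀ x j, g x j = ∑ ℓ, (α ℓ : ℂ) * Complex.I * (k : ℂ) * ((d ℓ j : ℝ) : ℂ) *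
      Complex.exp (Complex.I * (k : ℂ) * ((inner ℝ (d ℓ) (x - xK) : ℝ) : ℂ))) :
    ∀ K : Set (EuclideanSpace ℝ (Fin 2)), MeasurableSet K → volume K < ⊤ →
      K ⊆ Metric.closedBall xK hK →
      Real.sqrt (∫ x in K, ‖g x‖ ^ 2) ≤ hK * k ^ 2 * Real.sqrt ((volume K).toReal) := by
  intro K _ hKfin hKsub
  have hg_eq : g = gradPlaneWaveCombination k xK α d := by
    ext x j
    simp only [hg, gradPlaneWaveCombination, WithLp.ofLp_sum, Finset.sum_apply,
      PiLp.smul_apply, smul_eq_mul, EuclideanSpace.toComplex_apply]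
    exact Finset.sum_congr rfl fun ℓ _ ↦ by ring
  refine sqrt_setIntegral_norm_sq_le (by positivity) hKfin fun x hx ↦ ?_
  calc ‖g x‖ ≤ k ^ 2 * ‖x - xK‖ := hg_eq ▸ norm_gradPlaneWaveCombination_le hd hα hsum hvec x
    _ ≤ k ^ 2 * hK := by gcongr; exact mem_closedBall_iff_norm.mp (hKsub hx)
    _ = hK * k ^ 2 := mul_comm _ _

/-- `L²(K)` bound for the gradient of `b₁` on a set `K` contained in the closed
ball of radius `h_K` around `x_K`: `‖∇b₁‖_{L²(K)} ≤ h_K k² |K|^{1/2}`. -/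
theorem planeWaveCombination_grad_L2_bound
    (k : ℝ) (hk : 0 < k) (xK : EuclideanSpace ℝ (Fin 2)) (hK : ℝ) (hhK : 0 < hK)
    (n : ℕ) (d : Fin n → EuclideanSpace ℝ (Fin 2)) (hd : ∀ ℓ, ‖d ℓ‖ = 1)
    (α : Fin n → ℝ) (hα : ∀ ℓ, 0 ≤ α ℓ) (hsum : ∑ ℓ, α ℓ = 1)
    (hvec : ∑ ℓ, α ℓ • d ℓ = (0 : EuclideanSpace ℝ (Fin 2)))
    (g : EuclideanSpace ℝ (Fin 2) → EuclideanSpace ℂ (Fin 2))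
    (hg : ∀ x j, g x j = ∑ ℓ, (α ℓ : ℂ) * Complex.I * (k : ℂ) * ((d ℓ j : ℝ) : ℂ) *
      Complex.exp (Complex.I * (k : ℂ) * ((inner ℝ (d ℓ) (x - xK) : ℝ) : ℂ))) :
    ∀ K : Set (EuclideanSpace ℝ (Fin 2)), MeasurableSet K → volume K < ⊤ →
      K ⊆ Metric.closedBall xK hK →
      Real.sqrt (∫ x in K, ‖g x‖ ^ 2) ≤ hK * k ^ 2 * Real.sqrt ((volume K).toReal) :=
  planeWaveCombination_grad_L2_bound_general k xK hK hhK n d hd α hα hsum hvec g hg
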